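/- For all real numbers A, b with 0 < b ≤ A, the quantity β := 1 − sin(πb/A)/(πb/A) satisfies β ≥ b²/A². -/

import Mathlib

open Real

/-! Euler's product `sin (π x) / (π x) = ∏ₙ (1 - x² / n²)` has all its factors in `[0, 1]` when
`x² ≤ 1`, so it is at most its first factor `1 - x²`; take `x = b / A`. -/

open Filter Finset

lemma prod_range_succ_one_sub_sq_div_le {x : ℝ} (hx : x ^ 2 ≤ 1) (n : ℕ) :
    ∏ j ∈ range (n + 1), (1 - x ^ 2 / ((j : ℝ) + 1) ^ 2) ≤ 1 - x ^ 2 := by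
  have hfactor (j : ℕ) :
      0 ≤ 1 - x ^ 2 / ((j : ℝ) + 1) ^ 2 ∧ 1 - x ^ 2 / ((j : ℝ) + 1) ^ 2 ≤ 1 := by
    have hj : (1 : ℝ) ≤ ((j : ℝ) + 1) ^ 2 := one_le_pow₀ (by linarith [j.cast_nonneg (α := ℝ)])
    have hle : x ^ 2 / ((j : ℝ) + 1) ^ 2 ≤ 1 := div_le_one_of_le₀ (hx.trans hj) (by positivity)
    have hnonneg : 0 ≤ x ^ 2 / ((j : ℝ) + 1) ^ 2 := by positivity
    constructor <;> linarith
  rw [prod_range_succ']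
  calc _ ≤ 1 - x ^ 2 / (((0 : ℕ) : ℝ) + 1) ^ 2 := mul_le_of_le_one_left (hfactor 0).1
        (prod_le_one (fun j _ ↦ (hfactor (j + 1)).1) fun j _ ↦ (hfactor (j + 1)).2)
    _ = 1 - x ^ 2 := by norm_num

lemma sin_pi_mul_div_le {x : ℝ} (hx : x ^ 2 ≤ 1) : sin (π * x) / (π * x) ≤ 1 - x ^ 2 := by
  rcases eq_or_ne x 0 with rfl | hx0
  · simp
  have hπx : π * x ≠ 0 := mul_ne_zero pi_ne_zero hx0
  refine le_of_tendsto ((tendsto_euler_sin_prod x).div_const (π * x))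
    (eventually_atTop.2 ⟨1, fun n hn ↦ ?_⟩)
  obtain ⟨m, rfl⟩ := Nat.exists_eq_add_of_le' hn
  rw [mul_div_cancel_left₀ _ hπx]
  exact prod_range_succ_one_sub_sq_div_le hx m

theorem beta_lower_bound (A b : ℝ) (hb : 0 < b) (hbA : b ≤ A) :
    b ^ 2 / A ^ 2 ≤ 1 - Real.sin (π * b / A) / (π * b / A) := by
  have hA : 0 < A := hb.trans_le hbA
  have hx : (b / A) ^ 2 ≤ 1 := by
    rw [div_pow]
    exact div_le_one_of_le₀ (pow_le_pow_left₀ hb.le hbA 2) (by positivity)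
  rw [mul_div_assoc, ← div_pow]
  linarith [sin_pi_mul_div_le hx]
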